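/- For all forests F and G of size at most n, ed(P_hld(F), P_hld(G)) <= 2·ted(F_hld, G_hld) <= O(log n)·ted(F,G). -/
import Mathlib


/-- Rooted ordered labeled trees. -/
inductive LTree (α : Type) : Type where
  | node : α → List (LTree α) → LTree α

mutual
  /-- Number of nodes of a labeled tree. -/
  def tsize {α : Type} : LTree α → ℕ
    | .node _ ts => 1 + fsize ts
  /-- Number of nodes of a labeled forest. -/
  def fsize {α : Type} : List (LTree α) → ℕ
    | [] => 0
    | t :: ts => tsize t + fsize ts
end

mutual
  /-- Parenthesis representation of a tree: `(_a · str(children) · )_a`. -/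
  def pstr {α : Type} : LTree α → List (Bool × α)
    | .node a ts => (true, a) :: (pforest ts ++ [(false, a)])
  /-- Parenthesis representation of a forest. -/
  def pforest {α : Type} : List (LTree α) → List (Bool × α)
    | [] => []
    | t :: ts => pstr t ++ pforest ts
end

mutual
  /-- The pair `(o(u), c(u))` of positions, in the parenthesis representation,
  of the node `u` of a tree addressed by a list of child indices. -/
  def tpos {α : Type} : LTree α → List ℕ → Option (ℕ × ℕ)
    | t, [] => some (0, (pstr t).length - 1)
    | .node _ ts, k :: addr => (fpos ts (k :: addr)).map (fun p => (p.1 + 1, p.2 + 1))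
  /-- The pair `(o(u), c(u))` of positions of the node of a forest addressed by a
  nonempty list of child indices (the first index selects the tree). -/
  def fpos {α : Type} : List (LTree α) → List ℕ → Option (ℕ × ℕ)
    | [], _ => none
    | _ :: _, [] => none
    | t :: _, 0 :: addr => tpos t addr
    | t :: ts, (k + 1) :: addr =>
        (fpos ts (k :: addr)).map (fun p => (p.1 + (pstr t).length, p.2 + (pstr t).length))
end

mutual
  /-- The subtree of a tree at a given address. -/
  def tSub {α : Type} : LTree α → List ℕ → Option (LTree α)
    | t, [] => some t
    | .node _ ts, k :: addr => fSub ts (k :: addr)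
  /-- The subtree of a forest at a given (nonempty) address. -/
  def fSub {α : Type} : List (LTree α) → List ℕ → Option (LTree α)
    | [], _ => none
    | _ :: _, [] => none
    | t :: _, 0 :: addr => tSub t addr
    | _ :: ts, (k + 1) :: addr => fSub ts (k :: addr)
end

mutual
  /-- Embed a tree into trees labeled by `Option α` (no sentinels). -/
  def emb {α : Type} : LTree α → LTree (Option α)
    | .node a ts => .node (some a) (femb ts)
  def femb {α : Type} : List (LTree α) → List (LTree (Option α))
    | [] => []
    | t :: ts => emb t :: femb ts
end

/-- Replace each heavy child (heavy depth `n` equal to the parent's) by a sentinel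
node labeled `none`; keep light children verbatim. -/
def lightChildren {α : Type} (n : ℕ) : List (LTree α) → List (LTree (Option α))
  | [] => []
  | t :: ts =>
      (if Nat.log 2 (tsize t) = n then LTree.node none [] else emb t) ::
        lightChildren n ts

/-- The light subtree `F'(v)` : the subtree rooted at `v` with the subtree of its
heavy child (if any) replaced by a single sentinel node. -/
def lightSub {α : Type} : LTree α → LTree (Option α)
  | .node a ts => .node (some a) (lightChildren (Nat.log 2 (1 + fsize ts)) ts)

mutual
  /-- The modified (heavy-light) labeling: each node `v` is relabeled by the pair
  `(F'(v), heavy depth of F(v))`. -/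
  def hldTree {α : Type} : LTree α → LTree (LTree (Option α) × ℕ)
    | .node a ts =>
        .node (lightSub (.node a ts), Nat.log 2 (1 + fsize ts)) (hldForest ts)
  /-- The modified labeling of a forest. -/
  def hldForest {α : Type} : List (LTree α) → List (LTree (LTree (Option α) × ℕ))
    | [] => []
    | t :: ts => hldTree t :: hldForest ts
end

/-- One node edit on a forest: relabel, delete, or insert a node, at any depth. -/
inductive FStep {α : Type} : List (LTree α) → List (LTree α) → Prop where
  | relabel (pre post ts : List (LTree α)) (a b : α) :
      FStep (pre ++ LTree.node a ts :: post) (pre ++ LTree.node b ts :: post)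
  | delete (pre post ts : List (LTree α)) (a : α) :
      FStep (pre ++ LTree.node a ts :: post) (pre ++ ts ++ post)
  | insert (pre mid post : List (LTree α)) (a : α) :
      FStep (pre ++ mid ++ post) (pre ++ LTree.node a mid :: post)
  | congr (pre post ts ts' : List (LTree α)) (a : α) :
      FStep ts ts' → FStep (pre ++ LTree.node a ts :: post) (pre ++ LTree.node a ts' :: post)

/-- `FEdits n F G` : `G` can be obtained from `F` by `n` node edits. -/
inductive FEdits {α : Type} : ℕ → List (LTree α) → List (LTree α) → Prop where
  | refl (F : List (LTree α)) : FEdits 0 F F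
  | step {n : ℕ} {F G H : List (LTree α)} :
      FStep F G → FEdits n G H → FEdits (n + 1) F H

/-- Tree edit distance between forests. -/
noncomputable def ted {α : Type} (F G : List (LTree α)) : ℕ :=
  sInf {n | FEdits n F G}

/-- A single string edit: insertion, deletion, or substitution of one character. -/
inductive EditStep {β : Type} : List β → List β → Prop where
  | ins (u v : List β) (a : β) : EditStep (u ++ v) (u ++ a :: v)
  | del (u v : List β) (a : β) : EditStep (u ++ a :: v) (u ++ v)
  | sub (u v : List β) (a b : β) : EditStep (u ++ a :: v) (u ++ b :: v)

/-- `Edits n X Y` : `Y` can be obtained from `X` by `n` string edits. -/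
inductive Edits {β : Type} : ℕ → List β → List β → Prop where
  | refl (X : List β) : Edits 0 X X
  | step {n : ℕ} {X Y Z : List β} : EditStep X Y → Edits n Y Z → Edits (n + 1) X Z

/-- String edit distance. -/
noncomputable def ed {β : Type} (X Y : List β) : ℕ :=
  sInf {n | Edits n X Y}


/-! ### Auxiliary lemmas -/

section Aux
variable {α β : Type}

theorem fsize_append (A B : List (LTree α)) : fsize (A ++ B) = fsize A + fsize B := by
  induction A with
  | nil => simp [fsize]
  | cons t ts ih => simp [fsize, ih]; ring

theorem tsize_pos (t : LTree α) : 1 ≤ tsize t := by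
  cases t with
  | node a ts => simp [tsize]

theorem fsize_cons (t : LTree α) (ts : List (LTree α)) :
    fsize (t :: ts) = tsize t + fsize ts := rfl

theorem lightChildren_append (n : ℕ) (A B : List (LTree α)) :
    lightChildren n (A ++ B) = lightChildren n A ++ lightChildren n B := by
  induction A with
  | nil => simp [lightChildren]
  | cons t ts ih => simp [lightChildren, ih]

theorem hldForest_append (A B : List (LTree α)) :
    hldForest (A ++ B) = hldForest A ++ hldForest B := by
  induction A with
  | nil => simp [hldForest]
  | cons t ts ih => simp [hldForest, ih]

theorem pforest_append (A B : List (LTree β)) :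
    pforest (A ++ B) = pforest A ++ pforest B := by
  induction A with
  | nil => simp [pforest]
  | cons t ts ih => simp [pforest, ih]

theorem fedits_cast {m m' : ℕ} {A B : List (LTree α)} (h : m = m') (e : FEdits m A B) :
    FEdits m' A B := h ▸ e

theorem fedits_trans {m k : ℕ} {A B C : List (LTree α)}
    (h1 : FEdits m A B) (h2 : FEdits k B C) : FEdits (m + k) A C := by
  induction h1 with
  | refl F => simpa using h2
  | step s _ ih =>
      exact fedits_cast (by omega) (FEdits.step s (ih h2))

theorem fedits_snoc {m : ℕ} {A B C : List (LTree α)}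
    (h1 : FEdits m A B) (h2 : FStep B C) : FEdits (m + 1) A C :=
  fedits_trans h1 (FEdits.step h2 (FEdits.refl _))

theorem fedits_congr {m : ℕ} {X Y : List (LTree α)} (pre post : List (LTree α)) (a : α)
    (h : FEdits m X Y) :
    FEdits m (pre ++ LTree.node a X :: post) (pre ++ LTree.node a Y :: post) := by
  induction h with
  | refl F => exact FEdits.refl _
  | step s _ ih => exact FEdits.step (FStep.congr _ _ _ _ _ s) ih

theorem fstep_fsize {F G : List (LTree α)} (h : FStep F G) :
    fsize F ≤ fsize G + 1 ∧ fsize G ≤ fsize F + 1 := by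
  induction h with
  | relabel pre post ts a b => simp [fsize_append, fsize_cons, tsize]
  | delete pre post ts a =>
      simp [fsize_append, fsize_cons, tsize]; omega
  | insert pre mid post a =>
      simp [fsize_append, fsize_cons, tsize]; omega
  | congr pre post ts ts' a _ ih =>
      simp only [fsize_append, fsize_cons, tsize] at *; omega

theorem deleteAll : ∀ (n : ℕ) (F : List (LTree α)), fsize F = n → FEdits n F [] := by
  intro n
  induction n using Nat.strong_induction_on with
  | _ n ih =>
      intro F hF
      match F with
      | [] =>
          have : n = 0 := by simpa [fsize] using hF.symm
          subst this; exact FEdits.refl []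
      | (LTree.node a ts) :: rest =>
          have hs : fsize ((LTree.node a ts) :: rest) = 1 + (fsize ts + fsize rest) := by
            simp [fsize_cons, tsize]; ring
          have hn : n = (fsize ts + fsize rest) + 1 := by omega
          have step1 : FStep ((LTree.node a ts) :: rest) (ts ++ rest) := by
            have := FStep.delete ([] : List (LTree α)) rest ts a
            simpa using this
          have rec1 : FEdits (fsize ts + fsize rest) (ts ++ rest) [] := by
            apply ih (fsize ts + fsize rest) (by omega)
            simp [fsize_append]
          exact fedits_cast hn.symm (FEdits.step step1 rec1)

theorem insertAll : ∀ (n : ℕ) (G : List (LTree α)), fsize G = n → FEdits n [] G := by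
  intro n
  induction n using Nat.strong_induction_on with
  | _ n ih =>
      intro G hG
      match G with
      | [] =>
          have : n = 0 := by simpa [fsize] using hG.symm
          subst this; exact FEdits.refl []
      | (LTree.node a ts) :: rest =>
          have hs : fsize ((LTree.node a ts) :: rest) = 1 + (fsize ts + fsize rest) := by
            simp [fsize_cons, tsize]; ring
          have hn : n = (fsize ts + fsize rest) + 1 := by omega
          have rec1 : FEdits (fsize ts + fsize rest) ([] : List (LTree α)) (ts ++ rest) := by
            apply ih (fsize ts + fsize rest) (by omega)
            simp [fsize_append]
          have step1 : FStep (ts ++ rest) ((LTree.node a ts) :: rest) := by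
            have := FStep.insert ([] : List (LTree α)) ts rest a
            simpa using this
          exact fedits_cast hn.symm (fedits_snoc rec1 step1)

theorem fedits_total (F G : List (LTree α)) : FEdits (fsize F + fsize G) F G :=
  fedits_trans (deleteAll _ F rfl) (insertAll _ G rfl)

theorem ted_nonempty (F G : List (LTree α)) : {n | FEdits n F G}.Nonempty :=
  ⟨_, fedits_total F G⟩

theorem edits_cast {m m' : ℕ} {A B : List β} (h : m = m') (e : Edits m A B) :
    Edits m' A B := h ▸ e

theorem edits_trans {m k : ℕ} {A B C : List β}
    (h1 : Edits m A B) (h2 : Edits k B C) : Edits (m + k) A C := by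
  induction h1 with
  | refl X => simpa using h2
  | step s _ ih => exact edits_cast (by omega) (Edits.step s (ih h2))

theorem editstep_context {X Y : List β} (u v : List β) (h : EditStep X Y) :
    EditStep (u ++ X ++ v) (u ++ Y ++ v) := by
  cases h with
  | ins x y a =>
      have := EditStep.ins (u ++ x) (y ++ v) a
      simpa [List.append_assoc] using this
  | del x y a =>
      have := EditStep.del (u ++ x) (y ++ v) a
      simpa [List.append_assoc] using this
  | sub x y a b =>
      have := EditStep.sub (u ++ x) (y ++ v) a b
      simpa [List.append_assoc] using this

theorem edits_context {m : ℕ} {X Y : List β} (u v : List β) (h : Edits m X Y) :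
    Edits m (u ++ X ++ v) (u ++ Y ++ v) := by
  induction h with
  | refl X => exact Edits.refl _
  | step s _ ih => exact Edits.step (editstep_context u v s) ih

end Aux


section StringSide
variable {β : Type}

/-- Each tree edit induces at most two string edits on the parenthesis word. -/
theorem pstep_string {A B : List (LTree β)} (h : FStep A B) :
    ∃ e, e ≤ 2 ∧ Edits e (pforest A) (pforest B) := by
  induction h with
  | relabel pre post ts a b =>
      refine ⟨2, le_refl _, ?_⟩
      have hA : pforest (pre ++ LTree.node a ts :: post)
          = pforest pre ++ ((true, a) :: (pforest ts ++ [(false, a)])) ++ pforest post := by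
        simp [pforest_append, pforest, pstr]
      have hB : pforest (pre ++ LTree.node b ts :: post)
          = pforest pre ++ ((true, b) :: (pforest ts ++ [(false, b)])) ++ pforest post := by
        simp [pforest_append, pforest, pstr]
      rw [hA, hB]
      apply edits_context
      have s1 : EditStep ((true, a) :: (pforest ts ++ [(false, a)]))
          ((true, b) :: (pforest ts ++ [(false, a)])) := by
        have := EditStep.sub ([] : List (Bool × β)) (pforest ts ++ [(false, a)])
          (true, a) (true, b)
        simpa using this
      have s2 : EditStep ((true, b) :: (pforest ts ++ [(false, a)]))
          ((true, b) :: (pforest ts ++ [(false, b)])) := by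
        have := EditStep.sub ((true, b) :: pforest ts) ([] : List (Bool × β))
          (false, a) (false, b)
        simpa using this
      exact Edits.step s1 (Edits.step s2 (Edits.refl _))
  | delete pre post ts a =>
      refine ⟨2, le_refl _, ?_⟩
      have hA : pforest (pre ++ LTree.node a ts :: post)
          = pforest pre ++ ((true, a) :: (pforest ts ++ [(false, a)])) ++ pforest post := by
        simp [pforest_append, pforest, pstr]
      have hB : pforest (pre ++ ts ++ post)
          = pforest pre ++ pforest ts ++ pforest post := by
        simp [pforest_append]
      rw [hA, hB]
      apply edits_context
      have s1 : EditStep ((true, a) :: (pforest ts ++ [(false, a)]))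
          (pforest ts ++ [(false, a)]) := by
        have := EditStep.del ([] : List (Bool × β)) (pforest ts ++ [(false, a)]) (true, a)
        simpa using this
      have s2 : EditStep (pforest ts ++ [(false, a)]) (pforest ts) := by
        have := EditStep.del (pforest ts) ([] : List (Bool × β)) (false, a)
        simpa using this
      exact Edits.step s1 (Edits.step s2 (Edits.refl _))
  | insert pre mid post a =>
      refine ⟨2, le_refl _, ?_⟩
      have hA : pforest (pre ++ mid ++ post)
          = pforest pre ++ pforest mid ++ pforest post := by
        simp [pforest_append]
      have hB : pforest (pre ++ LTree.node a mid :: post)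
          = pforest pre ++ ((true, a) :: (pforest mid ++ [(false, a)])) ++ pforest post := by
        simp [pforest_append, pforest, pstr]
      rw [hA, hB]
      apply edits_context
      have s1 : EditStep (pforest mid) (pforest mid ++ [(false, a)]) := by
        have := EditStep.ins (pforest mid) ([] : List (Bool × β)) (false, a)
        simpa using this
      have s2 : EditStep (pforest mid ++ [(false, a)])
          ((true, a) :: (pforest mid ++ [(false, a)])) := by
        have := EditStep.ins ([] : List (Bool × β)) (pforest mid ++ [(false, a)]) (true, a)
        simpa using this
      exact Edits.step s1 (Edits.step s2 (Edits.refl _))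
  | congr pre post ts ts' a _ ih =>
      obtain ⟨e, he, hE⟩ := ih
      refine ⟨e, he, ?_⟩
      have hA : pforest (pre ++ LTree.node a ts :: post)
          = (pforest pre ++ [(true, a)]) ++ pforest ts ++ ((false, a) :: pforest post) := by
        simp [pforest_append, pforest, pstr]
      have hB : pforest (pre ++ LTree.node a ts' :: post)
          = (pforest pre ++ [(true, a)]) ++ pforest ts' ++ ((false, a) :: pforest post) := by
        simp [pforest_append, pforest, pstr]
      rw [hA, hB]
      exact edits_context _ _ hE

theorem pchain_string {k : ℕ} {A B : List (LTree β)} (h : FEdits k A B) :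
    ∃ E, E ≤ 2 * k ∧ Edits E (pforest A) (pforest B) := by
  induction h with
  | refl F => exact ⟨0, by omega, Edits.refl _⟩
  | step s _ ih =>
      obtain ⟨E, hE, hEd⟩ := ih
      obtain ⟨e, he, hed⟩ := pstep_string s
      exact ⟨e + E, by omega, edits_trans hed hEd⟩

end StringSide


section Core
variable {α : Type}

theorem log22 : Nat.log 2 2 = 1 := Nat.log_eq_one_iff'.2 (by omega)

/-- If the heavy-light data at the top changed, the logarithm strictly increases
from the child level to the parent level on at least one side. -/
theorem gain (pre post ts ts' : List (LTree α)) (a : α)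
    (hd1 : fsize ts ≤ fsize ts' + 1) (hd2 : fsize ts' ≤ fsize ts + 1)
    (h : ¬(lightChildren (Nat.log 2 (1 + fsize (pre ++ LTree.node a ts :: post)))
            (pre ++ LTree.node a ts :: post)
          = lightChildren (Nat.log 2 (1 + fsize (pre ++ LTree.node a ts' :: post)))
            (pre ++ LTree.node a ts' :: post)
        ∧ Nat.log 2 (1 + fsize (pre ++ LTree.node a ts :: post))
          = Nat.log 2 (1 + fsize (pre ++ LTree.node a ts' :: post)))) :
    Nat.log 2 (1 + fsize ts) + Nat.log 2 (1 + fsize ts') + 1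
      ≤ Nat.log 2 (1 + fsize (pre ++ LTree.node a ts :: post))
        + Nat.log 2 (1 + fsize (pre ++ LTree.node a ts' :: post)) := by
  have hf : fsize (pre ++ LTree.node a ts :: post)
      = fsize pre + (1 + fsize ts) + fsize post := by
    simp [fsize_append, fsize_cons, tsize]; ring
  have hg : fsize (pre ++ LTree.node a ts' :: post)
      = fsize pre + (1 + fsize ts') + fsize post := by
    simp [fsize_append, fsize_cons, tsize]; ring
  by_cases hN : Nat.log 2 (1 + fsize (pre ++ LTree.node a ts :: post))
      = Nat.log 2 (1 + fsize (pre ++ LTree.node a ts' :: post))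
  · -- logs at parent level are equal; the lightChildren lists differ
    have hP : ¬ lightChildren (Nat.log 2 (1 + fsize (pre ++ LTree.node a ts :: post)))
            (pre ++ LTree.node a ts :: post)
          = lightChildren (Nat.log 2 (1 + fsize (pre ++ LTree.node a ts' :: post)))
            (pre ++ LTree.node a ts' :: post) := fun hp => h ⟨hp, hN⟩
    have hxF : Nat.log 2 (1 + fsize ts)
        ≤ Nat.log 2 (1 + fsize (pre ++ LTree.node a ts :: post)) :=
      Nat.log_mono_right (by omega)
    have hyG : Nat.log 2 (1 + fsize ts')
        ≤ Nat.log 2 (1 + fsize (pre ++ LTree.node a ts' :: post)) :=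
      Nat.log_mono_right (by omega)
    have key : ¬(Nat.log 2 (1 + fsize ts)
          = Nat.log 2 (1 + fsize (pre ++ LTree.node a ts :: post))
        ∧ Nat.log 2 (1 + fsize ts')
          = Nat.log 2 (1 + fsize (pre ++ LTree.node a ts' :: post))) := by
      rintro ⟨h1, h2⟩
      apply hP
      have e1 : Nat.log 2 (tsize (LTree.node a ts))
          = Nat.log 2 (1 + fsize (pre ++ LTree.node a ts :: post)) := by
        simpa [tsize] using h1
      have e2 : Nat.log 2 (tsize (LTree.node a ts'))
          = Nat.log 2 (1 + fsize (pre ++ LTree.node a ts' :: post)) := by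
        simpa [tsize] using h2
      rw [lightChildren_append, lightChildren_append]
      rw [show lightChildren (Nat.log 2 (1 + fsize (pre ++ LTree.node a ts :: post)))
            (LTree.node a ts :: post)
          = LTree.node none [] :: lightChildren
              (Nat.log 2 (1 + fsize (pre ++ LTree.node a ts :: post))) post by
        simp [lightChildren, e1]]
      rw [show lightChildren (Nat.log 2 (1 + fsize (pre ++ LTree.node a ts' :: post)))
            (LTree.node a ts' :: post)
          = LTree.node none [] :: lightChildren
              (Nat.log 2 (1 + fsize (pre ++ LTree.node a ts' :: post))) post by
        simp [lightChildren, e2]]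
      rw [hN]
    omega
  · -- the parent-level logs differ; sizes differ by exactly one
    rcases Nat.lt_or_ge (fsize ts') (fsize ts) with hlt | hge
    · have hx : fsize ts = fsize ts' + 1 := by omega
      have h1 : Nat.log 2 (1 + fsize ts)
          ≤ Nat.log 2 (1 + fsize (pre ++ LTree.node a ts' :: post)) :=
        Nat.log_mono_right (by omega)
      have h2 : Nat.log 2 (1 + fsize ts')
          ≤ Nat.log 2 (1 + fsize (pre ++ LTree.node a ts' :: post)) :=
        Nat.log_mono_right (by omega)
      have h3 : Nat.log 2 (1 + fsize (pre ++ LTree.node a ts' :: post))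
          ≤ Nat.log 2 (1 + fsize (pre ++ LTree.node a ts :: post)) :=
        Nat.log_mono_right (by omega)
      omega
    · have hx : fsize ts' = fsize ts + 1 := by
        rcases Nat.eq_or_lt_of_le hge with he | hl
        · exfalso; apply hN; rw [hf, hg, he]
        · omega
      have h1 : Nat.log 2 (1 + fsize ts')
          ≤ Nat.log 2 (1 + fsize (pre ++ LTree.node a ts :: post)) :=
        Nat.log_mono_right (by omega)
      have h2 : Nat.log 2 (1 + fsize ts)
          ≤ Nat.log 2 (1 + fsize (pre ++ LTree.node a ts :: post)) :=
        Nat.log_mono_right (by omega)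
      have h3 : Nat.log 2 (1 + fsize (pre ++ LTree.node a ts :: post))
          ≤ Nat.log 2 (1 + fsize (pre ++ LTree.node a ts' :: post)) :=
        Nat.log_mono_right (by omega)
      omega

/-- Per-step lemma: a single tree edit on `F` induces at most
`1 + 2·(log |F| + log |G|)` edits on the heavy-light relabeled forest, and one
fewer when the top-level heavy-light data is unchanged. -/
theorem star {F G : List (LTree α)} (h : FStep F G) :
    ∃ m, FEdits m (hldForest F) (hldForest G) ∧
      m ≤ 1 + 2 * (Nat.log 2 (1 + fsize F) + Nat.log 2 (1 + fsize G)) ∧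
      (¬(lightChildren (Nat.log 2 (1 + fsize F)) F
            = lightChildren (Nat.log 2 (1 + fsize G)) G
          ∧ Nat.log 2 (1 + fsize F) = Nat.log 2 (1 + fsize G)) →
        m + 1 ≤ 1 + 2 * (Nat.log 2 (1 + fsize F) + Nat.log 2 (1 + fsize G))) := by
  induction h with
  | relabel pre post ts a b =>
      refine ⟨1, ?_, ?_, ?_⟩
      · have hA : hldForest (pre ++ LTree.node a ts :: post)
            = hldForest pre ++ LTree.node (lightSub (LTree.node a ts),
                Nat.log 2 (1 + fsize ts)) (hldForest ts) :: hldForest post := by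
          simp [hldForest_append, hldForest, hldTree]
        have hB : hldForest (pre ++ LTree.node b ts :: post)
            = hldForest pre ++ LTree.node (lightSub (LTree.node b ts),
                Nat.log 2 (1 + fsize ts)) (hldForest ts) :: hldForest post := by
          simp [hldForest_append, hldForest, hldTree]
        rw [hA, hB]
        exact FEdits.step (FStep.relabel _ _ _ _ _) (FEdits.refl _)
      · omega
      · intro _
        have h1 : (1:ℕ) ≤ Nat.log 2 (1 + fsize (pre ++ LTree.node a ts :: post)) := by
          have : (2:ℕ) ≤ 1 + fsize (pre ++ LTree.node a ts :: post) := by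
            simp [fsize_append, fsize_cons, tsize]; omega
          calc (1:ℕ) = Nat.log 2 2 := log22.symm
            _ ≤ _ := Nat.log_mono_right this
        omega
  | delete pre post ts a =>
      refine ⟨1, ?_, ?_, ?_⟩
      · have hA : hldForest (pre ++ LTree.node a ts :: post)
            = hldForest pre ++ LTree.node (lightSub (LTree.node a ts),
                Nat.log 2 (1 + fsize ts)) (hldForest ts) :: hldForest post := by
          simp [hldForest_append, hldForest, hldTree]
        have hB : hldForest (pre ++ ts ++ post)
            = hldForest pre ++ hldForest ts ++ hldForest post := by
          simp [hldForest_append]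
        rw [hA, hB]
        exact FEdits.step (FStep.delete _ _ _ _) (FEdits.refl _)
      · omega
      · intro _
        have h1 : (1:ℕ) ≤ Nat.log 2 (1 + fsize (pre ++ LTree.node a ts :: post)) := by
          have : (2:ℕ) ≤ 1 + fsize (pre ++ LTree.node a ts :: post) := by
            simp [fsize_append, fsize_cons, tsize]; omega
          calc (1:ℕ) = Nat.log 2 2 := log22.symm
            _ ≤ _ := Nat.log_mono_right this
        omega
  | insert pre mid post a =>
      refine ⟨1, ?_, ?_, ?_⟩
      · have hA : hldForest (pre ++ mid ++ post)
            = hldForest pre ++ hldForest mid ++ hldForest post := by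
          simp [hldForest_append]
        have hB : hldForest (pre ++ LTree.node a mid :: post)
            = hldForest pre ++ LTree.node (lightSub (LTree.node a mid),
                Nat.log 2 (1 + fsize mid)) (hldForest mid) :: hldForest post := by
          simp [hldForest_append, hldForest, hldTree]
        rw [hA, hB]
        exact FEdits.step (FStep.insert _ _ _ _) (FEdits.refl _)
      · omega
      · intro _
        have h1 : (1:ℕ) ≤ Nat.log 2 (1 + fsize (pre ++ LTree.node a mid :: post)) := by
          have : (2:ℕ) ≤ 1 + fsize (pre ++ LTree.node a mid :: post) := by
            simp [fsize_append, fsize_cons, tsize]; omega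
          calc (1:ℕ) = Nat.log 2 2 := log22.symm
            _ ≤ _ := Nat.log_mono_right this
        omega
  | congr pre post ts ts' a st ih =>
      obtain ⟨m, hE, hB1, hB2⟩ := ih
      have hfs := fstep_fsize st
      have hA : hldForest (pre ++ LTree.node a ts :: post)
          = hldForest pre ++ LTree.node (lightSub (LTree.node a ts),
              Nat.log 2 (1 + fsize ts)) (hldForest ts) :: hldForest post := by
        simp [hldForest_append, hldForest, hldTree]
      have hA' : hldForest (pre ++ LTree.node a ts' :: post)
          = hldForest pre ++ LTree.node (lightSub (LTree.node a ts'),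
              Nat.log 2 (1 + fsize ts')) (hldForest ts') :: hldForest post := by
        simp [hldForest_append, hldForest, hldTree]
      have monoF : Nat.log 2 (1 + fsize ts)
          ≤ Nat.log 2 (1 + fsize (pre ++ LTree.node a ts :: post)) :=
        Nat.log_mono_right (by simp [fsize_append, fsize_cons, tsize]; omega)
      have monoG : Nat.log 2 (1 + fsize ts')
          ≤ Nat.log 2 (1 + fsize (pre ++ LTree.node a ts' :: post)) :=
        Nat.log_mono_right (by simp [fsize_append, fsize_cons, tsize]; omega)
      by_cases hc : lightChildren (Nat.log 2 (1 + fsize ts)) ts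
            = lightChildren (Nat.log 2 (1 + fsize ts')) ts'
          ∧ Nat.log 2 (1 + fsize ts) = Nat.log 2 (1 + fsize ts')
      · -- the label of the edited node's parent-slot is unchanged
        have hlab : (lightSub (LTree.node a ts), Nat.log 2 (1 + fsize ts))
            = (lightSub (LTree.node a ts'), Nat.log 2 (1 + fsize ts')) := by
          have : lightSub (LTree.node a ts) = lightSub (LTree.node a ts') := by
            simp only [lightSub]
            rw [hc.1]
          exact Prod.ext this hc.2
        refine ⟨m, ?_, by omega, ?_⟩
        · rw [hA, hA', hlab]
          exact fedits_congr _ _ _ hE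
        · intro hch
          have := gain pre post ts ts' a (by omega) (by omega) hch
          omega
      · -- the label changed: one extra relabel edit
        have hm1 := hB2 hc
        refine ⟨m + 1, ?_, by omega, ?_⟩
        · rw [hA, hA']
          exact fedits_snoc (fedits_congr _ _ _ hE) (FStep.relabel _ _ _ _ _)
        · intro hch
          have := gain pre post ts ts' a (by omega) (by omega) hch
          omega

end Core


section Assemble
variable {α : Type}

theorem chain {k : ℕ} {F G : List (LTree α)} (h : FEdits k F G) :
    ∀ t : ℕ, fsize F + k ≤ t →
      ∃ M, M ≤ k * (1 + 4 * Nat.log 2 (1 + t)) ∧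
        FEdits M (hldForest F) (hldForest G) := by
  induction h with
  | refl F => intro t _; exact ⟨0, by omega, FEdits.refl _⟩
  | step s rest ih =>
      intro t ht
      rename_i n F G' H
      have hG' := fstep_fsize s
      obtain ⟨M, hM, hE⟩ := ih t (by omega)
      obtain ⟨m, hme, hmb, _⟩ := star s
      have l1 : Nat.log 2 (1 + fsize F) ≤ Nat.log 2 (1 + t) :=
        Nat.log_mono_right (by omega)
      have l2 : Nat.log 2 (1 + fsize G') ≤ Nat.log 2 (1 + t) :=
        Nat.log_mono_right (by omega)
      refine ⟨m + M, ?_, fedits_trans hme hE⟩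
      have : m ≤ 1 + 4 * Nat.log 2 (1 + t) := by omega
      calc m + M ≤ (1 + 4 * Nat.log 2 (1 + t)) + n * (1 + 4 * Nat.log 2 (1 + t)) := by
            omega
        _ = (n + 1) * (1 + 4 * Nat.log 2 (1 + t)) := by ring

theorem log_succ_le (n : ℕ) : Nat.log 2 (n + 1) ≤ Nat.log 2 n + 1 := by
  rcases Nat.eq_zero_or_pos n with h | h
  · subst h; simp [Nat.log_one_right]
  · calc Nat.log 2 (n + 1) ≤ Nat.log 2 (n * 2) := Nat.log_mono_right (by omega)
      _ = Nat.log 2 n + 1 := Nat.log_mul_base (by omega) (by omega)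

theorem log_3n (n : ℕ) : Nat.log 2 (1 + (3 * n + 1)) ≤ Nat.log 2 n + 4 := by
  have h1 : Nat.log 2 (1 + (3 * n + 1)) ≤ Nat.log 2 ((n + 1) * 2 * 2) :=
    Nat.log_mono_right (by omega)
  have h2 : Nat.log 2 ((n + 1) * 2 * 2) = Nat.log 2 (n + 1) + 2 := by
    rw [Nat.log_mul_base (by omega) (by positivity),
      Nat.log_mul_base (by omega) (by omega)]
  have h3 := log_succ_le n
  omega

end Assemble

/-- For all forests `F` and `G` of size at most `n`,
`ed(P_hld(F), P_hld(G)) ≤ 2·ted(F_hld, G_hld) ≤ O(log n)·ted(F,G)`. -/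
theorem stmt12 :
    ∃ C : ℕ, ∀ (n : ℕ) (α : Type) (F G : List (LTree α)),
      fsize F ≤ n → fsize G ≤ n →
      ed (pforest (hldForest F)) (pforest (hldForest G)) ≤
          2 * ted (hldForest F) (hldForest G) ∧
        2 * ted (hldForest F) (hldForest G) ≤ C * (Nat.log 2 n + 1) * ted F G := by
  refine ⟨42, fun n α F G hF hG => ?_⟩
  -- the minimal edit sequence between F and G
  have hne : {k | FEdits k F G}.Nonempty := ted_nonempty F G
  have hk : FEdits (ted F G) F G := Nat.sInf_mem hne
  have hkle : ted F G ≤ fsize F + fsize G := Nat.sInf_le (fedits_total F G)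
  -- transport it to the heavy-light labeled forests
  obtain ⟨M, hM, hME⟩ := chain hk (3 * n + 1) (by omega)
  have hted2 : ted (hldForest F) (hldForest G) ≤ M := Nat.sInf_le hME
  -- the minimal edit sequence between the labeled forests
  have hne2 : {k | FEdits k (hldForest F) (hldForest G)}.Nonempty := ⟨M, hME⟩
  have hk2 : FEdits (ted (hldForest F) (hldForest G)) (hldForest F) (hldForest G) :=
    Nat.sInf_mem hne2
  obtain ⟨E, hE2, hEd⟩ := pchain_string hk2
  constructor
  · exact le_trans (Nat.sInf_le hEd) hE2
  · -- arithmetic: M ≤ ted F G · (1 + 4·log(1+3n+1)) and log(2+3n) ≤ log n + 4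
    have hlog := log_3n n
    have : M ≤ ted F G * (1 + 4 * (Nat.log 2 n + 4)) := by
      refine le_trans hM (Nat.mul_le_mul_left _ (by omega))
    have h21 : ted F G * (1 + 4 * (Nat.log 2 n + 4)) ≤ ted F G * (21 * (Nat.log 2 n + 1)) :=
      Nat.mul_le_mul_left _ (by ring_nf; omega)
    calc 2 * ted (hldForest F) (hldForest G) ≤ 2 * M := by omega
      _ ≤ 2 * (ted F G * (21 * (Nat.log 2 n + 1))) := by omega
      _ = 42 * (Nat.log 2 n + 1) * ted F G := by ring
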